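/- Let d be a positive integer, let A be a real number, and let l⁰, l^∞, w⁰, w^∞ be positive integers. Define f(b) as the real polynomial f(b) = (w⁰)^{2(d+1)}·b^{2d+3}·(A·l^∞ + l⁰(d+1)w^∞ − b(d+1)l⁰w⁰) − (w⁰)^{d+2}(w^∞)^{d}·b^{d+3}·(d+1)·(A(d+1)l^∞ − l⁰((d+1)w⁰ + (d+2)w^∞)) + (w⁰)^{d+1}(w^∞)^{d+1}·b^{d+2}·(2Ad(d+2)l^∞ − (d+1)(2d+3)l⁰(w⁰ + w^∞)) − (w⁰)^{d}(w^∞)^{d+2}·b^{d+1}·(d+1)·(A(d+1)l^∞ − l⁰((d+2)w⁰ + (d+1)w^∞)) + (w^∞)^{2(d+1)}·(b·(A·l^∞ + l⁰(d+1)w⁰) − (d+1)l⁰w^∞). Then f is a nonzero polynomial of degree 2d+4, and the number of distinct real roots of f different from w^∞/w⁰ is at most 2d+1. -/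

import Mathlib

open Polynomial

/-!
`F` has degree `2d+4`, and `w^∞/w⁰` is a root of multiplicity at least three, since `F` and its
first two derivatives vanish there. A nonzero polynomial has at most `natDegree - rootMultiplicity t`
distinct roots other than `t`, which leaves at most `2d+1` of them.
-/

/-- The polynomial `f(b)` of Equation (functionf), as an element of `ℝ[b]`. -/
noncomputable def F (d : ℕ) (A : ℝ) (l0 linf w0 winf : ℕ) : Polynomial ℝ :=
  C ((w0:ℝ)^(2*(d+1))) * X^(2*d+3) *
      (C (A*(linf:ℝ) + (l0:ℝ)*((d:ℝ)+1)*(winf:ℝ)) - C (((d:ℝ)+1)*(l0:ℝ)*(w0:ℝ)) * X)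
    - C ((w0:ℝ)^(d+2) * (winf:ℝ)^d * ((d:ℝ)+1) *
        (A*((d:ℝ)+1)*(linf:ℝ) - (l0:ℝ)*(((d:ℝ)+1)*(w0:ℝ) + ((d:ℝ)+2)*(winf:ℝ)))) * X^(d+3)
    + C ((w0:ℝ)^(d+1) * (winf:ℝ)^(d+1) *
        (2*A*(d:ℝ)*((d:ℝ)+2)*(linf:ℝ) - ((d:ℝ)+1)*(2*(d:ℝ)+3)*(l0:ℝ)*((w0:ℝ)+(winf:ℝ)))) * X^(d+2)
    - C ((w0:ℝ)^d * (winf:ℝ)^(d+2) * ((d:ℝ)+1) *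
        (A*((d:ℝ)+1)*(linf:ℝ) - (l0:ℝ)*(((d:ℝ)+2)*(w0:ℝ) + ((d:ℝ)+1)*(winf:ℝ)))) * X^(d+1)
    + C ((winf:ℝ)^(2*(d+1))) *
      (C (A*(linf:ℝ) + (l0:ℝ)*((d:ℝ)+1)*(w0:ℝ)) * X - C (((d:ℝ)+1)*(l0:ℝ)*(winf:ℝ)))


namespace Polynomial

variable {R : Type*} [CommRing R] [IsDomain R]

theorem encard_setOf_eval_eq_zero_and_ne_le {p : R[X]} (hp : p ≠ 0) (t : R) :
    {b | p.eval b = 0 ∧ b ≠ t}.encard ≤ (p.natDegree - p.rootMultiplicity t : ℕ) := by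
  classical
  obtain ⟨q, hpq, hq⟩ := p.exists_eq_pow_rootMultiplicity_mul_and_not_dvd hp t
  set m := p.rootMultiplicity t
  have hq0 : q ≠ 0 := by rintro rfl; exact hq (dvd_zero _)
  have hdeg : p.natDegree = m + q.natDegree := by
    rw [hpq, natDegree_mul (pow_ne_zero _ (X_sub_C_ne_zero t)) hq0, natDegree_pow,
      natDegree_X_sub_C, mul_one]
  have hsub : {b | p.eval b = 0 ∧ b ≠ t} ⊆ q.roots.toFinset := by
    rintro b ⟨hb, hbt⟩
    rw [hpq, eval_mul, eval_pow, eval_sub, eval_X, eval_C] at hb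
    simpa [hq0] using (mul_eq_zero.mp hb).resolve_left (pow_ne_zero _ (sub_ne_zero.mpr hbt))
  calc _ ≤ (q.roots.toFinset : Set R).encard := Set.encard_le_encard hsub
    _ = q.roots.toFinset.card := Set.encard_coe_eq_coe_finsetCard _
    _ ≤ (p.natDegree - m : ℕ) := by
      rw [hdeg, Nat.add_sub_cancel_left]
      exact_mod_cast (Multiset.toFinset_card_le _).trans (card_roots' q)

end Polynomial

lemma F_eq_monomials (d : ℕ) (A : ℝ) (l0 linf w0 winf : ℕ) :
    F d A l0 linf w0 winf =
      - C ((w0:ℝ)^(2*(d+1)) * (((d:ℝ)+1)*(l0:ℝ)*(w0:ℝ))) * X^(2*d+4)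
      + C ((w0:ℝ)^(2*(d+1)) * (A*(linf:ℝ) + (l0:ℝ)*((d:ℝ)+1)*(winf:ℝ))) * X^(2*d+3)
      - C ((w0:ℝ)^(d+2) * (winf:ℝ)^d * ((d:ℝ)+1) *
          (A*((d:ℝ)+1)*(linf:ℝ) - (l0:ℝ)*(((d:ℝ)+1)*(w0:ℝ) + ((d:ℝ)+2)*(winf:ℝ)))) * X^(d+3)
      + C ((w0:ℝ)^(d+1) * (winf:ℝ)^(d+1) *
          (2*A*(d:ℝ)*((d:ℝ)+2)*(linf:ℝ) - ((d:ℝ)+1)*(2*(d:ℝ)+3)*(l0:ℝ)*((w0:ℝ)+(winf:ℝ)))) * X^(d+2)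
      - C ((w0:ℝ)^d * (winf:ℝ)^(d+2) * ((d:ℝ)+1) *
          (A*((d:ℝ)+1)*(linf:ℝ) - (l0:ℝ)*(((d:ℝ)+2)*(w0:ℝ) + ((d:ℝ)+1)*(winf:ℝ)))) * X^(d+1)
      + C ((winf:ℝ)^(2*(d+1)) * (A*(linf:ℝ) + (l0:ℝ)*((d:ℝ)+1)*(w0:ℝ))) * X
      - C ((winf:ℝ)^(2*(d+1)) * (((d:ℝ)+1)*(l0:ℝ)*(winf:ℝ))) := by
  simp only [F, C_mul]
  ring

lemma F_natDegree (d : ℕ) (A : ℝ) (l0 linf w0 winf : ℕ) (hl0 : 0 < l0) (hw0 : 0 < w0) :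
    (F d A l0 linf w0 winf).natDegree = 2*d+4 := by
  rw [F_eq_monomials]
  apply natDegree_eq_of_le_of_coeff_ne_zero
  · compute_degree
    all_goals omega
  · have hlead : (0:ℝ) < (w0:ℝ)^(2*(d+1)) * (((d:ℝ)+1)*(l0:ℝ)*(w0:ℝ)) := by positivity
    simp only [coeff_add, coeff_sub, neg_mul, coeff_neg, coeff_C_mul, coeff_X_pow, coeff_X, coeff_C]
    simp (disch := omega) only [if_neg]
    simpa using hlead.ne'

lemma F_ne_zero (d : ℕ) (A : ℝ) (l0 linf w0 winf : ℕ) (hl0 : 0 < l0) (hw0 : 0 < w0) :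
    F d A l0 linf w0 winf ≠ 0 :=
  ne_zero_of_natDegree_gt (n := 0) (by rw [F_natDegree d A l0 linf w0 winf hl0 hw0]; omega)

lemma F_iterate_derivative_isRoot (d : ℕ) (A : ℝ) (l0 linf w0 winf : ℕ) (hw0 : 0 < w0) :
    ∀ m ≤ 2, (derivative^[m] (F d A l0 linf w0 winf)).IsRoot ((winf:ℝ)/(w0:ℝ)) := by
  set t := (winf:ℝ)/(w0:ℝ)
  have hwinf_eq : (winf:ℝ) = w0 * t := (mul_div_cancel₀ _ (by positivity)).symm
  intro m hm
  -- Splitting off `d = 0` lets `Nat.add_sub_cancel` clear the exponents `n - 1` produced by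
  -- `derivative_X_pow`; with `w^∞ = w⁰ t` substituted, each condition is then a ring identity.
  cases d <;> interval_cases m <;>
    · rw [F_eq_monomials]
      simp only [Function.iterate_zero, Function.iterate_succ, Function.comp_apply, id_eq, IsRoot.def,
        derivative_sub, derivative_add, derivative_neg, derivative_X_pow, derivative_X,
        derivative_C, derivative_mul, derivative_zero, derivative_one, Nat.add_sub_cancel,
        eval_add, eval_sub, eval_neg, eval_mul, eval_pow, eval_X, eval_C, eval_zero, eval_one]
      rw [hwinf_eq]
      push_cast
      ring

lemma three_le_rootMultiplicity_F (d : ℕ) (A : ℝ) (l0 linf w0 winf : ℕ) (hl0 : 0 < l0)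
    (hw0 : 0 < w0) : 3 ≤ (F d A l0 linf w0 winf).rootMultiplicity ((winf:ℝ)/(w0:ℝ)) :=
  lt_rootMultiplicity_of_isRoot_iterate_derivative (F_ne_zero d A l0 linf w0 winf hl0 hw0)
    (F_iterate_derivative_isRoot d A l0 linf w0 winf hw0)

theorem stmt_11_general (d : ℕ) (A : ℝ) (l0 linf w0 winf : ℕ)
    (hl0 : 0 < l0) (hw0 : 0 < w0) :
    F d A l0 linf w0 winf ≠ 0 ∧
    (F d A l0 linf w0 winf).natDegree = 2*d+4 ∧
    {b : ℝ | (F d A l0 linf w0 winf).eval b = 0 ∧ b ≠ (winf:ℝ)/(w0:ℝ)}.encard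
      ≤ ((2*d+1 : ℕ) : ℕ∞) := by
  have hF := F_ne_zero d A l0 linf w0 winf hl0 hw0
  have hdeg := F_natDegree d A l0 linf w0 winf hl0 hw0
  have hmult := three_le_rootMultiplicity_F d A l0 linf w0 winf hl0 hw0
  refine ⟨hF, hdeg, (encard_setOf_eval_eq_zero_and_ne_le hF _).trans ?_⟩
  exact_mod_cast (by omega : _ ≤ 2*d+1)

/-- `f` is nonzero of degree `2d+4`, and it has at most `2d+1` distinct real
roots different from `w^∞/w⁰`. -/
theorem stmt_11 (d : ℕ) (hd : 0 < d) (A : ℝ) (l0 linf w0 winf : ℕ)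
    (hl0 : 0 < l0) (hlinf : 0 < linf) (hw0 : 0 < w0) (hwinf : 0 < winf) :
    F d A l0 linf w0 winf ≠ 0 ∧
    (F d A l0 linf w0 winf).natDegree = 2*d+4 ∧
    {b : ℝ | (F d A l0 linf w0 winf).eval b = 0 ∧ b ≠ (winf:ℝ)/(w0:ℝ)}.encard
      ≤ ((2*d+1 : ℕ) : ℕ∞) :=
  stmt_11_general d A l0 linf w0 winf hl0 hw0
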